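/- For all n ≥ 2, the expected distance from the root to a uniformly selected leaf (selected uniformly over all (tree, leaf) pairs with the tree a plane tree on n vertices) equals (2n-2)!!/(2·(2n-3)!!), where k!! denotes the double factorial. -/
import Mathlib


inductive PlaneTree : Type where
  | node : List PlaneTree → PlaneTree

namespace PlaneTree

mutual
def size : PlaneTree → ℕ
  | .node ts => 1 + sizeList ts
def sizeList : List PlaneTree → ℕ
  | [] => 0
  | t :: ts => size t + sizeList ts
end

mutual
def positions : PlaneTree → List (List ℕ)
  | .node ts => [] :: positionsList 0 ts
def positionsList : ℕ → List PlaneTree → List (List ℕ)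
  | _, [] => []
  | i, t :: ts => (positions t).map (i :: ·) ++ positionsList (i+1) ts
end

mutual
def leafPositions : PlaneTree → List (List ℕ)
  | .node [] => [[]]
  | .node (t :: ts) => leafList 0 (t :: ts)
def leafList : ℕ → List PlaneTree → List (List ℕ)
  | _, [] => []
  | i, t :: ts => (leafPositions t).map (i :: ·) ++ leafList (i+1) ts
end

def isPrefixB : List ℕ → List ℕ → Bool
  | [], _ => true
  | _ :: _, [] => false
  | a :: as, b :: bs => a == b && isPrefixB as bs

def lcpLen : List ℕ → List ℕ → ℕ
  | a :: as, b :: bs => if a = b then 1 + lcpLen as bs else 0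
  | _, _ => 0

/-- number of edges on the path between two vertices given by positions -/
def pathDist (p q : List ℕ) : ℕ :=
  (p.length - lcpLen p q) + (q.length - lcpLen p q)

/-- number of vertical paths (vertex, proper descendant) in a tree -/
def verticalPairs (T : PlaneTree) : ℕ :=
  ((positions T).map (fun q =>
    ((positions T).filter (fun p => p != q && isPrefixB p q)).length)).sum

/-- total number of edges over all vertical paths in a tree -/
def verticalEdges (T : PlaneTree) : ℕ :=
  ((positions T).map (fun q =>
    (((positions T).filter (fun p => p != q && isPrefixB p q)).map
      (fun p => q.length - p.length)).sum)).sum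

/-- number of (unordered) paths between distinct vertices -/
def pathCount (T : PlaneTree) : ℕ := ((positions T).sublistsLen 2).length

/-- Wiener index: sum of distances over unordered pairs of distinct vertices -/
def wiener (T : PlaneTree) : ℕ :=
  (((positions T).sublistsLen 2).map (fun l =>
    match l with
    | [p, q] => pathDist p q
    | _ => 0)).sum

end PlaneTree

namespace PlaneTree

mutual
def beq : PlaneTree → PlaneTree → Bool
  | .node a, .node b => beqList a b
def beqList : List PlaneTree → List PlaneTree → Bool
  | [], [] => true
  | a :: as, b :: bs => beq a b && beqList as bs
  | _, _ => false
end

mutual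
theorem beq_iff : ∀ a b : PlaneTree, beq a b = true ↔ a = b
  | .node a, .node b => by
    rw [beq, beqList_iff a b]
    exact ⟨fun h => by rw [h], fun h => by injection h⟩
theorem beqList_iff : ∀ a b : List PlaneTree, beqList a b = true ↔ a = b
  | [], [] => by simp [beqList]
  | [], _ :: _ => by simp [beqList]
  | _ :: _, [] => by simp [beqList]
  | a :: as, b :: bs => by
    rw [beqList, Bool.and_eq_true, beq_iff a b, beqList_iff as bs]; simp
end

instance : DecidableEq PlaneTree := fun a b => decidable_of_iff _ (beq_iff a b)

theorem node_injective : Function.Injective node := fun a b h => by injection h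

/-- all lists of plane trees with total size m -/
def listsOf : ℕ → Finset (List PlaneTree)
  | 0 => {[]}
  | (m+1) => (Finset.range (m+1)).attach.biUnion fun k =>
      (((listsOf k.1).image node) ×ˢ listsOf (m - k.1)).image fun p => p.1 :: p.2
  decreasing_by
    · have := k.2; simp only [Finset.mem_range] at this; omega
    · omega

theorem listsOf_zero : listsOf 0 = {[]} := by rw [listsOf]

theorem listsOf_succ (m : ℕ) : listsOf (m+1) = (Finset.range (m+1)).biUnion fun k =>
    (((listsOf k).image node) ×ˢ listsOf (m - k)).image fun p => p.1 :: p.2 := by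
  rw [listsOf]
  ext ls
  simp only [Finset.mem_biUnion, Finset.mem_attach, true_and, Subtype.exists, Finset.mem_range]
  tauto

theorem mem_listsOf : ∀ m ls, ls ∈ listsOf m ↔ sizeList ls = m := by
  intro m
  induction m using Nat.strong_induction_on with
  | _ m ih =>
    intro ls
    cases m with
    | zero =>
      cases ls with
      | nil => simp [listsOf_zero, sizeList]
      | cons t ts =>
        simp only [listsOf_zero, Finset.mem_singleton]
        cases t with
        | node us => simp [sizeList, size]
    | succ m =>
      cases ls with
      | nil =>
        simp only [listsOf_succ, Finset.mem_biUnion, Finset.mem_range, Finset.mem_image,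
          Finset.mem_product, sizeList]
        constructor
        · rintro ⟨k, _, ⟨a, b⟩, _, h⟩; simp at h
        · omega
      | cons t ts =>
        cases t with
        | node us =>
          simp only [listsOf_succ, Finset.mem_biUnion, Finset.mem_range, Finset.mem_image,
            Finset.mem_product, sizeList, size]
          constructor
          · rintro ⟨k, hk, ⟨a, b⟩, ⟨⟨⟨vs, hvs, rfl⟩, hb⟩, heq⟩⟩
            injection heq with h1 h2
            subst h2
            injection h1 with h1
            subst h1
            rw [ih k (by omega) vs] at hvs
            rw [ih (m - k) (by omega) b] at hb
            dsimp only at *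
            omega
          · intro h
            refine ⟨sizeList us, by omega, (node us, ts), ⟨⟨⟨us, ?_, rfl⟩, ?_⟩, rfl⟩⟩
            · rw [ih (sizeList us) (by omega) us]
            · rw [ih (m - sizeList us) (by omega) ts]; omega

def lcount (T : PlaneTree) : ℕ := (leafPositions T).length
def ldepth (T : PlaneTree) : ℕ := ((leafPositions T).map List.length).sum

theorem leafList_length (ts : List PlaneTree) :
    ∀ i, (leafList i ts).length = (ts.map lcount).sum := by
  induction ts with
  | nil => intro i; simp [leafList]
  | cons t ts ih => intro i; simp [leafList, lcount, ih]

theorem leafList_sum (ts : List PlaneTree) :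
    ∀ i, ((leafList i ts).map List.length).sum = (ts.map (fun t => ldepth t + lcount t)).sum := by
  induction ts with
  | nil => intro i; simp [leafList]
  | cons t ts ih =>
    intro i
    simp only [leafList, List.map_append, List.sum_append, List.map_map, List.map_cons,
      List.sum_cons, ih]
    congr 1
    simp only [ldepth, lcount]
    rw [show (List.length ∘ fun x => i :: x) = (fun l => List.length l + 1) from rfl]
    generalize t.leafPositions = l
    induction l with
    | nil => simp
    | cons p l ihl => simp at ihl ⊢; omega

theorem lcount_node (ts : List PlaneTree) :
    lcount (node ts) = if ts = [] then 1 else (ts.map lcount).sum := by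
  cases ts with
  | nil => simp [lcount, leafPositions]
  | cons t ts => simp [lcount, leafPositions, leafList_length]

theorem ldepth_node (ts : List PlaneTree) :
    ldepth (node ts) = (ts.map (fun t => ldepth t + lcount t)).sum := by
  cases ts with
  | nil => simp [ldepth, leafPositions]
  | cons t ts => simp only [ldepth, leafPositions, leafList_sum]

/-- key reindexing lemma for sums over `listsOf (m+1)` -/
theorem sum_listsOf_succ {M : Type*} [AddCommMonoid M] (F : List PlaneTree → M) (m : ℕ) :
    ∑ ls ∈ listsOf (m+1), F ls
      = ∑ k ∈ Finset.range (m+1), ∑ hs ∈ listsOf k, ∑ tl ∈ listsOf (m-k), F (node hs :: tl) := by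
  rw [listsOf_succ]
  rw [Finset.sum_biUnion]
  · apply Finset.sum_congr rfl
    intro k _
    rw [Finset.sum_image]
    · rw [Finset.sum_product]
      rw [Finset.sum_image]
      intro a _ b _ h
      exact node_injective h
    · rintro ⟨a, b⟩ _ ⟨c, d⟩ _ h
      injection h with h1 h2
      exact Prod.ext h1 h2
  · intro x hx y hy hxy
    simp only [Finset.mem_coe, Finset.mem_range] at hx hy
    simp only [Function.onFun]
    rw [Finset.disjoint_left]
    intro ls h1' h2'
    simp only [Finset.mem_image, Finset.mem_product] at h1' h2'
    obtain ⟨⟨a, b⟩, ⟨⟨⟨va, hva, rfl⟩, hb⟩, rfl⟩⟩ := h1'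
    obtain ⟨⟨c, d⟩, ⟨⟨⟨vc, hvc, rfl⟩, hd⟩, heq⟩⟩ := h2'
    · injection heq with h1 h2
      injection h1 with h1
      subst h1
      rw [mem_listsOf] at hva hvc
      exact hxy (hva ▸ hvc)

end PlaneTree
-- appended after work.lean content (inside namespace PlaneTree)
namespace PlaneTree

theorem sum_map_add (l : List PlaneTree) (f g : PlaneTree → ℕ) :
    (l.map fun t => f t + g t).sum = (l.map f).sum + (l.map g).sum := by
  induction l with
  | nil => simp
  | cons t l ih => simp [ih]; omega

/-- sum of `u (node hs)` over all `hs` with total size `k` (i.e. over trees of size `k+1`) -/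
def Su (u : PlaneTree → ℕ) (k : ℕ) : ℕ := ∑ hs ∈ listsOf k, u (node hs)

/-- sum of `∑_{t ∈ ls} u t` over all lists of total size `m` -/
def Au (u : PlaneTree → ℕ) (m : ℕ) : ℕ := ∑ ls ∈ listsOf m, (ls.map u).sum

theorem Au_zero (u : PlaneTree → ℕ) : Au u 0 = 0 := by simp [Au, listsOf_zero]

theorem card_listsOf : ∀ m, (listsOf m).card = catalan m := by
  intro m
  induction m using Nat.strong_induction_on with
  | _ m ih =>
    cases m with
    | zero => simp [listsOf_zero]
    | succ m =>
      have : (listsOf (m+1)).card = ∑ ls ∈ listsOf (m+1), 1 := by simp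
      rw [this, sum_listsOf_succ (fun _ => 1) m]
      rw [catalan_succ, Fin.sum_univ_eq_sum_range (fun i => catalan i * catalan (m - i)) (m+1)]
      apply Finset.sum_congr rfl
      intro k hk
      simp only [Finset.mem_range] at hk
      simp [Finset.sum_const, ih k (by omega), ih (m - k) (by omega), mul_comm]

theorem Au_succ (u : PlaneTree → ℕ) (m : ℕ) :
    Au u (m+1) = ∑ k ∈ Finset.range (m+1),
      (Su u k * catalan (m-k) + catalan k * Au u (m-k)) := by
  rw [Au, sum_listsOf_succ]
  apply Finset.sum_congr rfl
  intro k hk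
  simp only [List.map_cons, List.sum_cons]
  have : ∀ hs ∈ listsOf k, ∑ tl ∈ listsOf (m-k), (u (node hs) + (tl.map u).sum)
      = catalan (m-k) * u (node hs) + Au u (m-k) := by
    intro hs _
    rw [Finset.sum_add_distrib, Finset.sum_const, smul_eq_mul, ← card_listsOf]
    rfl
  rw [Finset.sum_congr rfl this, Finset.sum_add_distrib, Finset.sum_const, smul_eq_mul,
    ← Finset.mul_sum, card_listsOf, Su, mul_comm]

theorem Su_lcount (k : ℕ) : Su lcount k = Au lcount k + (if k = 0 then 1 else 0) := by
  cases k with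
  | zero => simp [Su, Au_zero, listsOf_zero, lcount_node]
  | succ k =>
    simp only [Nat.succ_ne_zero, if_neg, add_zero, Su, Au]
    apply Finset.sum_congr rfl
    intro hs hhs
    rw [lcount_node]
    rw [if_neg]
    intro h
    rw [mem_listsOf] at hhs
    subst h
    simp [sizeList] at hhs

theorem Su_ldepth (k : ℕ) : Su ldepth k = Au ldepth k + Au lcount k := by
  rw [Su, Au, Au, ← Finset.sum_add_distrib]
  apply Finset.sum_congr rfl
  intro hs _
  rw [ldepth_node, sum_map_add]

theorem catalan_rec (n : ℕ) : (n+2) * catalan (n+1) = 2*(2*n+1) * catalan n := by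
  apply Nat.eq_of_mul_eq_mul_left (show 0 < n+1 by omega)
  calc (n+1) * ((n+2) * catalan (n+1))
      = (n+1) * ((n+1+1) * catalan (n+1)) := by ring_nf
    _ = (n+1) * Nat.centralBinom (n+1) := by rw [succ_mul_catalan_eq_centralBinom]
    _ = 2*(2*n+1) * Nat.centralBinom n := Nat.succ_mul_centralBinom_succ n
    _ = 2*(2*n+1) * ((n+1) * catalan n) := by rw [succ_mul_catalan_eq_centralBinom]
    _ = (n+1) * (2*(2*n+1) * catalan n) := by ring

theorem catalan_conv (m : ℕ) :
    ∑ k ∈ Finset.range (m+1), (catalan k : ℚ) * catalan (m-k) = catalan (m+1) := by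
  rw [catalan_succ, Fin.sum_univ_eq_sum_range (fun i => catalan i * catalan (m - i)) (m+1)]
  push_cast
  rfl

end PlaneTree
namespace PlaneTree

theorem idE (m : ℕ) :
    2 * (∑ k ∈ Finset.range (m+1), (4:ℚ)^k * catalan (m-k)) + ((m:ℚ)+2) * catalan (m+1)
      = 4^(m+1) := by
  induction m with
  | zero => simp [catalan_one]; norm_num
  | succ m ih =>
    rw [Finset.sum_range_succ']
    have hstep : ∀ i ∈ Finset.range (m+1),
        (4:ℚ)^(i+1) * catalan (m+1-(i+1)) = 4 * ((4:ℚ)^i * catalan (m-i)) := by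
      intro i _
      rw [Nat.succ_sub_succ]
      ring
    rw [Finset.sum_congr rfl hstep, ← Finset.mul_sum]
    have hc : ((m:ℚ)+1+2) * catalan (m+1+1) = 2*(2*(m:ℚ)+3) * catalan (m+1) := by
      have h := congrArg (Nat.cast : ℕ → ℚ) (catalan_rec (m+1))
      push_cast at h
      linear_combination h
    push_cast
    push_cast at hc ih
    linear_combination 4 * ih + hc

theorem P1 : ∀ m : ℕ, 2 * (Au lcount m : ℚ) + (if m = 0 then 1 else 0)
    = ((m:ℚ)+1) * catalan m := by
  intro m
  induction m using Nat.strong_induction_on with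
  | _ m ih =>
    cases m with
    | zero => simp [Au_zero]
    | succ m =>
      rw [if_neg (Nat.succ_ne_zero m), add_zero]
      have hcast : (Au lcount (m+1) : ℚ) = ∑ k ∈ Finset.range (m+1),
          ((Su lcount k : ℚ) * catalan (m-k) + (catalan k : ℚ) * Au lcount (m-k)) := by
        rw [Au_succ]; push_cast; rfl
      have claim : ∀ k ∈ Finset.range (m+1),
          2 * ((Su lcount k : ℚ) * catalan (m-k) + (catalan k : ℚ) * Au lcount (m-k))
            = ((m:ℚ)+2) * ((catalan k : ℚ) * catalan (m-k))
              + ((if k = 0 then (catalan m : ℚ) else 0)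
                - (if k = m then (catalan m : ℚ) else 0)) := by
        intro k hk
        simp only [Finset.mem_range] at hk
        have hk' : k ≤ m := by omega
        have h1 := ih k (by omega)
        have h2 := ih (m - k) (by omega)
        have hsu := congrArg (Nat.cast : ℕ → ℚ) (Su_lcount k)
        rw [show ((m - k : ℕ) : ℚ) = (m:ℚ) - k from by push_cast [Nat.cast_sub hk']; ring] at h2
        have hsu0 : Su lcount 0 = 1 := by rw [Su_lcount]; simp [Au_zero]
        by_cases h0 : k = 0 <;> by_cases hm : k = m
        · -- k = 0 = m
          subst h0
          have hm0 : m = 0 := by omega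
          subst hm0
          simp [hsu0, Au_zero]
        · -- k = 0, m ≠ 0
          subst h0
          rw [if_pos rfl, if_neg (by omega : ¬ (0:ℕ) = m), Nat.sub_zero]
          rw [Nat.sub_zero] at h2
          rw [if_neg (by omega : ¬ m = 0)] at h2
          rw [hsu0]
          simp only [catalan_zero, Nat.cast_one, Nat.cast_zero]
          push_cast at h2 ⊢
          linear_combination h2
        · -- k = m ≠ 0
          subst hm
          rw [if_neg h0, if_pos rfl, Nat.sub_self]
          rw [if_neg h0] at h1
          push_cast at hsu
          rw [if_neg h0] at hsu
          simp only [Au_zero, catalan_zero, Nat.cast_zero, Nat.cast_one]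
          linear_combination h1 + 2 * hsu
        · -- generic
          rw [if_neg h0, if_neg hm]
          rw [if_neg h0] at h1
          rw [if_neg (by omega : ¬ m - k = 0)] at h2
          push_cast at hsu
          rw [if_neg h0] at hsu
          linear_combination (catalan (m-k) : ℚ) * h1 + 2 * ((catalan (m-k)) : ℚ) * hsu
            + (catalan k : ℚ) * h2
      rw [hcast, Finset.mul_sum, Finset.sum_congr rfl claim, Finset.sum_add_distrib,
        ← Finset.mul_sum, catalan_conv, Finset.sum_sub_distrib]
      rw [Finset.sum_ite_eq' (Finset.range (m+1)) 0 (fun _ => (catalan m : ℚ)),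
        Finset.sum_ite_eq' (Finset.range (m+1)) m (fun _ => (catalan m : ℚ))]
      simp only [Finset.mem_range, Nat.lt_succ_iff, Nat.zero_le, le_refl, if_pos]
      push_cast
      ring

end PlaneTree
namespace PlaneTree

theorem P2 : ∀ m : ℕ, 4 * (Au ldepth m : ℚ) + 2*((m:ℚ)+1) * catalan m
    = 4^m + (if m = 0 then 1 else 0) := by
  intro m
  induction m using Nat.strong_induction_on with
  | _ m ih =>
    cases m with
    | zero => simp [Au_zero]; norm_num
    | succ m =>
      rw [if_neg (Nat.succ_ne_zero m), add_zero]
      have hcast : (Au ldepth (m+1) : ℚ) = ∑ k ∈ Finset.range (m+1),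
          ((Su ldepth k : ℚ) * catalan (m-k) + (catalan k : ℚ) * Au ldepth (m-k)) := by
        rw [Au_succ]; push_cast; rfl
      have claim : ∀ k ∈ Finset.range (m+1),
          4 * ((Su ldepth k : ℚ) * catalan (m-k) + (catalan k : ℚ) * Au ldepth (m-k))
            = ((4:ℚ)^k * catalan (m-k) + (catalan k : ℚ) * 4^(m-k))
              - 2*(((m:ℚ)-k)+1)*((catalan k : ℚ) * catalan (m-k))
              - (if k = 0 then (catalan m : ℚ) else 0)
              + (if k = m then (catalan m : ℚ) else 0) := by
        intro k hk
        simp only [Finset.mem_range] at hk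
        have hk' : k ≤ m := by omega
        have hB1 := ih k (by omega)
        have hB2 := ih (m - k) (by omega)
        have hA1 := P1 k
        have hsu : (Su ldepth k : ℚ) = (Au ldepth k : ℚ) + (Au lcount k : ℚ) := by
          have := congrArg (Nat.cast : ℕ → ℚ) (Su_ldepth k)
          push_cast at this
          exact this
        rw [show ((m - k : ℕ) : ℚ) = (m:ℚ) - k from by push_cast [Nat.cast_sub hk']; ring] at hB2
        by_cases h0 : k = 0 <;> by_cases hm : k = m
        · -- k = 0 = m
          subst h0
          have hm0 : m = 0 := by omega
          subst hm0
          have : Su ldepth 0 = 0 := by rw [Su_ldepth]; simp [Au_zero]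
          simp [this, Au_zero]
          norm_num
        · -- k = 0, m ≠ 0
          subst h0
          rw [if_pos rfl, if_neg (by omega : ¬ (0:ℕ) = m), Nat.sub_zero]
          rw [Nat.sub_zero] at hB2
          rw [if_neg (by omega : ¬ m = 0)] at hB2
          have hsu0 : Su ldepth 0 = 0 := by rw [Su_ldepth]; simp [Au_zero]
          rw [hsu0]
          simp only [catalan_zero, Nat.cast_one, Nat.cast_zero, pow_zero]
          push_cast at hB2 ⊢
          linear_combination hB2
        · -- k = m ≠ 0
          subst hm
          rw [if_neg h0, if_pos rfl, Nat.sub_self]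
          rw [if_neg h0] at hB1
          rw [if_neg h0] at hA1
          simp only [Au_zero, catalan_zero, Nat.cast_zero, Nat.cast_one, pow_zero]
          rw [hsu]
          linear_combination hB1 + 2 * hA1
        · -- generic
          rw [if_neg h0, if_neg hm]
          rw [if_neg h0] at hB1 hA1
          rw [if_neg (by omega : ¬ m - k = 0)] at hB2
          rw [hsu]
          linear_combination (catalan (m-k) : ℚ) * hB1 + 2 * (catalan (m-k) : ℚ) * hA1
            + (catalan k : ℚ) * hB2
      have href1 : ∑ k ∈ Finset.range (m+1), (catalan k : ℚ) * 4^(m-k)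
          = ∑ k ∈ Finset.range (m+1), (4:ℚ)^k * catalan (m-k) := by
        rw [← Finset.sum_range_reflect (fun k => (4:ℚ)^k * catalan (m-k)) (m+1)]
        apply Finset.sum_congr rfl
        intro j hj
        simp only [Finset.mem_range] at hj
        rw [Nat.add_sub_cancel, show m - (m - j) = j from by omega]
        ring
      have href2 : ∑ k ∈ Finset.range (m+1), (((m:ℚ)-k)+1)*((catalan k : ℚ) * catalan (m-k))
          = ∑ k ∈ Finset.range (m+1), ((k:ℚ)+1)*((catalan k : ℚ) * catalan (m-k)) := by
        rw [← Finset.sum_range_reflect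
          (fun k => ((k:ℚ)+1)*((catalan k : ℚ) * catalan (m-k))) (m+1)]
        apply Finset.sum_congr rfl
        intro j hj
        simp only [Finset.mem_range] at hj
        rw [Nat.add_sub_cancel, show m - (m - j) = j from by omega,
          show ((m - j : ℕ) : ℚ) = (m:ℚ) - j from by push_cast [Nat.cast_sub (by omega : j ≤ m)]; ring]
        ring
      have hcc : ∑ k ∈ Finset.range (m+1), 2*(((m:ℚ)-k)+1)*((catalan k : ℚ) * catalan (m-k))
          = ((m:ℚ)+2) * ∑ k ∈ Finset.range (m+1), (catalan k : ℚ) * catalan (m-k) := by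
        have e1 : ∀ k ∈ Finset.range (m+1),
            2*(((m:ℚ)-k)+1)*((catalan k : ℚ) * catalan (m-k))
              = (((m:ℚ)-k)+1)*((catalan k : ℚ) * catalan (m-k))
                + (((m:ℚ)-k)+1)*((catalan k : ℚ) * catalan (m-k)) := by
          intro k _; ring
        rw [Finset.sum_congr rfl e1, Finset.sum_add_distrib]
        nth_rewrite 2 [href2]
        rw [← Finset.sum_add_distrib, Finset.mul_sum]
        apply Finset.sum_congr rfl
        intro k _; ring
      have h4 : 4 * (Au ldepth (m+1) : ℚ) = ∑ k ∈ Finset.range (m+1),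
          4 * ((Su ldepth k : ℚ) * catalan (m-k) + (catalan k : ℚ) * Au ldepth (m-k)) := by
        rw [hcast, Finset.mul_sum]
      have hsum : 4 * (Au ldepth (m+1) : ℚ)
          = 2 * (∑ k ∈ Finset.range (m+1), (4:ℚ)^k * catalan (m-k))
            - ((m:ℚ)+2) * catalan (m+1) := by
        rw [h4, Finset.sum_congr rfl claim]
        simp only [Finset.sum_add_distrib, Finset.sum_sub_distrib]
        rw [href1, hcc, catalan_conv]
        rw [Finset.sum_ite_eq' (Finset.range (m+1)) 0 (fun _ => (catalan m : ℚ)),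
          Finset.sum_ite_eq' (Finset.range (m+1)) m (fun _ => (catalan m : ℚ))]
        simp only [Finset.mem_range, Nat.lt_succ_iff, Nat.zero_le, le_refl, if_pos]
        ring
      have hE := idE m
      rw [hsum]
      push_cast
      linear_combination hE

end PlaneTree
namespace PlaneTree

theorem catalan_ne_zero (n : ℕ) : catalan n ≠ 0 := by
  intro h
  have h1 := succ_mul_catalan_eq_centralBinom n
  have h2 := Nat.centralBinom_pos n
  rw [h, mul_zero] at h1
  omega

theorem doubleFact_key (p : ℕ) (hp : 1 ≤ p) :
    4^p * Nat.doubleFactorial (2*p-1) = Nat.doubleFactorial (2*p) * Nat.centralBinom p := by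
  have hfac : (2*p).factorial = Nat.doubleFactorial (2*p) * Nat.doubleFactorial (2*p-1) := by
    have h := Nat.factorial_eq_mul_doubleFactorial (2*p-1)
    rw [show 2*p-1+1 = 2*p from by omega] at h
    exact h
  have h2p : Nat.doubleFactorial (2*p) = 2^p * p.factorial := Nat.doubleFactorial_two_mul p
  have hcb : Nat.centralBinom p * (p.factorial * p.factorial) = (2*p).factorial := by
    have h := Nat.choose_mul_factorial_mul_factorial (show p ≤ 2*p by omega)
    rw [show 2*p-p = p from by omega] at h
    rw [show Nat.centralBinom p = (2*p).choose p from rfl]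
    rw [← h]; ring
  have key : 4^p * Nat.doubleFactorial (2*p-1) * (p.factorial * p.factorial)
      = (Nat.doubleFactorial (2*p) * Nat.centralBinom p) * (p.factorial * p.factorial) := by
    calc 4^p * Nat.doubleFactorial (2*p-1) * (p.factorial * p.factorial)
        = (2^p * p.factorial) * ((2^p * p.factorial) * Nat.doubleFactorial (2*p-1)) := by ring_nf; rw [show (4:ℕ) = 2^2 from rfl, ← pow_mul]; ring_nf
      _ = (2^p * p.factorial) * (Nat.doubleFactorial (2*p) * Nat.doubleFactorial (2*p-1)) := by rw [h2p]
      _ = (2^p * p.factorial) * (2*p).factorial := by rw [hfac]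
      _ = (2^p * p.factorial) * (Nat.centralBinom p * (p.factorial * p.factorial)) := by rw [hcb]
      _ = (Nat.doubleFactorial (2*p) * Nat.centralBinom p) * (p.factorial * p.factorial) := by rw [h2p]; ring
  exact Nat.eq_of_mul_eq_mul_right (by positivity) key

end PlaneTree

theorem expected_root_to_leaf_distance_plane_trees (n : ℕ) (hn : 2 ≤ n) :
    (∑ᶠ T : {T : PlaneTree // T.size = n}, (((T.1.leafPositions).map List.length).sum : ℚ))
        / (∑ᶠ T : {T : PlaneTree // T.size = n}, ((T.1.leafPositions).length : ℚ))
      = (Nat.doubleFactorial (2 * n - 2) : ℚ) / (2 * (Nat.doubleFactorial (2 * n - 3) : ℚ)) := by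
  open PlaneTree in
  set p := n - 1 with hpdef
  have hp : 1 ≤ p := by omega
  have hnp : n = p + 1 := by omega
  have hchar : ∀ T : PlaneTree, T ∈ (listsOf p).image node ↔ T.size = n := by
    intro T
    cases T with
    | node ts =>
      simp only [Finset.mem_image]
      constructor
      · rintro ⟨a, ha, h⟩
        injection h with h
        subst h
        rw [mem_listsOf] at ha
        rw [size]; omega
      · intro h
        rw [size] at h
        exact ⟨ts, by rw [mem_listsOf]; omega, rfl⟩
  letI : Fintype {T : PlaneTree // T.size = n} :=
    Fintype.subtype ((listsOf p).image node) hchar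
  have hnum : (∑ᶠ T : {T : PlaneTree // T.size = n}, (((T.1.leafPositions).map List.length).sum : ℚ))
      = (Su ldepth p : ℚ) := by
    rw [finsum_eq_sum_of_fintype]
    rw [← Finset.sum_subtype ((listsOf p).image node) hchar
      (fun T => (((T.leafPositions).map List.length).sum : ℚ))]
    rw [Finset.sum_image (fun a _ b _ h => node_injective h)]
    rw [Su, Nat.cast_sum]
    rfl
  have hden : (∑ᶠ T : {T : PlaneTree // T.size = n}, ((T.1.leafPositions).length : ℚ))
      = (Su lcount p : ℚ) := by
    rw [finsum_eq_sum_of_fintype]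
    rw [← Finset.sum_subtype ((listsOf p).image node) hchar
      (fun T => ((T.leafPositions).length : ℚ))]
    rw [Finset.sum_image (fun a _ b _ h => node_injective h)]
    rw [Su, Nat.cast_sum]
    rfl
  rw [hnum, hden]
  -- values of the two sums
  have hA := P1 p
  rw [if_neg (by omega : ¬ p = 0), add_zero] at hA
  have hB := P2 p
  rw [if_neg (by omega : ¬ p = 0), add_zero] at hB
  have e2 : 2 * (Su lcount p : ℚ) = ((p:ℚ)+1) * catalan p := by
    have h := congrArg (Nat.cast : ℕ → ℚ) (Su_lcount p)
    rw [if_neg (by omega : ¬ p = 0), add_zero] at h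
    rw [h]; exact hA
  have e1 : 4 * (Su ldepth p : ℚ) = 4^p := by
    have h := congrArg (Nat.cast : ℕ → ℚ) (Su_ldepth p)
    push_cast at h
    rw [h]
    linear_combination hB + 2 * hA
  have hcatpos : (0:ℚ) < catalan p := by exact_mod_cast Nat.pos_of_ne_zero (catalan_ne_zero p)
  have hdf : (0:ℚ) < Nat.doubleFactorial (2*p-1) := by exact_mod_cast Nat.doubleFactorial_pos _
  have hden1 : (Su lcount p : ℚ) ≠ 0 := by
    intro h; rw [h, mul_zero] at e2
    have : ((p:ℚ)+1) > 0 := by positivity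
    nlinarith
  rw [show 2*n-2 = 2*p from by omega, show 2*n-3 = 2*p-1 from by omega]
  rw [div_eq_div_iff hden1 (by positivity)]
  have e3 : (4:ℚ)^p * Nat.doubleFactorial (2*p-1)
      = Nat.doubleFactorial (2*p) * Nat.centralBinom p := by
    exact_mod_cast congrArg (Nat.cast : ℕ → ℚ) (PlaneTree.doubleFact_key p hp)
  have e4 : ((p:ℚ)+1) * catalan p = Nat.centralBinom p := by
    exact_mod_cast congrArg (Nat.cast : ℕ → ℚ) (succ_mul_catalan_eq_centralBinom p)
  linear_combination ((Nat.doubleFactorial (2*p-1) : ℚ)/2) * e1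
    - ((Nat.doubleFactorial (2*p) : ℚ)/2) * e2 + (1/2) * e3
    - ((Nat.doubleFactorial (2*p) : ℚ)/2) * e4
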